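/- arXiv:1503.02567 — 3 statements merged into one kernel-verified Lean document; each statement's English description precedes it below -/
import Mathlib

section
/- Let p > 2, let (Ω, F, μ) be a probability space and let f: Ω → ℝ be an integrable function with lim_{t→∞} t^p μ{|f| > t} = 0. Then for every sub-σ-algebra A of F, lim_{t→∞} t^p μ{ E[|f| | A] > t } = 0. -/
open MeasureTheory ProbabilityTheory Filter Set
open scoped Topology ENNReal NNReal

noncomputable section

/-- `N_p(f) = sup_{A : μ(A) > 0} μ(A)^{−1+1/p} E[|f| χ_A]`, as an extended nonnegative real. -/
def Np {Ω : Type*} [MeasurableSpace Ω] (μ : Measure Ω) (p : ℝ) (f : Ω → ℝ) : ℝ≥0∞ :=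
  ⨆ (A : Set Ω) (_ : MeasurableSet A) (_ : 0 < μ A),
    μ A ^ (-1 + 1/p) * ∫⁻ ω in A, ENNReal.ofReal |f ω| ∂μ

/-- `‖f‖_{p,∞}^p = sup_{t > 0} t^p μ{|f| > t}`, as an extended nonnegative real. -/
def wkNormPow {Ω : Type*} [MeasurableSpace Ω] (μ : Measure Ω) (p : ℝ) (f : Ω → ℝ) : ℝ≥0∞ :=
  ⨆ (t : ℝ) (_ : 0 < t), ENNReal.ofReal (t ^ p) * μ {ω | t < |f ω|}

/-!
Let `B = {E[|f| | A] > t}`, a set in `A`. Then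
`t μ(B) ≤ ∫_B E[|f| | A] = ∫_B |f| ≤ (t/2) μ(B) + ∫ (|f| - t/2)⁺`,
and by the layer-cake formula `∫ (|f| - s)⁺ = ∫_s^∞ μ{|f| > u} du ≤ ε s^{1-p} / (p - 1)`
as soon as `u^p μ{|f| > u} ≤ ε` for all `u ≥ s`. Hence `t^p μ(B) ≤ 2^p ε / (p - 1)`
for `t ≥ 2s`.
-/

lemma lintegral_ofReal_sub_le_of_tail {Ω : Type*} [MeasurableSpace Ω] {μ : Measure Ω}
    {g : Ω → ℝ} (hg : AEMeasurable g μ) {p ε s : ℝ} (hp : 1 < p) (hε : 0 ≤ ε) (hs : 0 < s)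
    (htail : ∀ u, s ≤ u → μ {ω | u < g ω} ≤ ENNReal.ofReal (ε * u ^ (-p))) :
    ∫⁻ ω, ENNReal.ofReal (g ω - s) ∂μ ≤ ENNReal.ofReal (ε * s ^ (1 - p) / (p - 1)) := by
  have hlayer :
      ∫⁻ ω, ENNReal.ofReal (g ω - s) ∂μ = ∫⁻ t in Ioi 0, μ {ω | t + s < g ω} := by
    have := lintegral_eq_lintegral_meas_lt μ (f := fun ω => max (g ω - s) 0)
      (.of_forall fun _ => le_max_right _ _) (by fun_prop)
    simp only [ENNReal.ofReal_max, ENNReal.ofReal_zero, max_zero] at this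
    rw [this]
    refine setLIntegral_congr_fun measurableSet_Ioi fun t ht => ?_
    simp only [lt_max_iff, not_lt_of_gt (mem_Ioi.1 ht), or_false, lt_sub_iff_add_lt]
  have hp' : -p < -1 := by linarith
  calc ∫⁻ ω, ENNReal.ofReal (g ω - s) ∂μ
      = ∫⁻ t in Ioi 0, μ {ω | t + s < g ω} := hlayer
    _ ≤ ∫⁻ t in Ioi 0, ENNReal.ofReal (ε * (t + s) ^ (-p)) :=
        setLIntegral_mono (by fun_prop) fun t ht => htail _ (by rw [mem_Ioi] at ht; linarith)
    _ = ∫⁻ u in Ioi s, ENNReal.ofReal (ε * u ^ (-p)) := by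
        have := (measurePreserving_add_right volume s).setLIntegral_comp_preimage
          (measurableSet_Ioi (a := s)) (f := fun u => ENNReal.ofReal (ε * u ^ (-p))) (by fun_prop)
        rwa [preimage_add_const_Ioi, sub_self] at this
    _ = ENNReal.ofReal (∫ u in Ioi s, ε * u ^ (-p)) :=
        (ofReal_integral_eq_lintegral_ofReal ((integrableOn_Ioi_rpow_of_lt hp' hs).const_mul ε)
          (ae_restrict_of_forall_mem measurableSet_Ioi fun u hu => by
            have : 0 < u := hs.trans hu
            positivity)).symm
    _ = ENNReal.ofReal (ε * s ^ (1 - p) / (p - 1)) := by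
        rw [integral_const_mul, integral_Ioi_rpow_of_lt hp' hs, show -p + 1 = 1 - p by ring,
          neg_div, ← div_neg, neg_sub, mul_div_assoc]

lemma sub_mul_measureReal_lt_condExp_le {Ω : Type*} {m mΩ : MeasurableSpace Ω}
    {μ : Measure Ω} [IsFiniteMeasure μ] (hm : m ≤ mΩ) {h : Ω → ℝ} (hh : Integrable h μ)
    (s t : ℝ) :
    (t - s) * μ.real {ω | t < μ[h|m] ω} ≤ ∫ ω, max (h ω - s) 0 ∂μ := by
  set B := {ω | t < μ[h|m] ω}
  have hBm : MeasurableSet[m] B :=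
    measurableSet_lt measurable_const stronglyMeasurable_condExp.measurable
  have hB : MeasurableSet B := hm _ hBm
  have hmarkov : t * μ.real B ≤ ∫ ω in B, h ω ∂μ := by
    rw [← setIntegral_condExp hm hh hBm]
    exact setIntegral_ge_of_const_le_real hB (measure_ne_top _ _) (fun ω hω => hω.le)
      integrable_condExp.integrableOn
  have hpos : Integrable (fun ω => max (h ω - s) 0) μ := (hh.sub (integrable_const s)).pos_part
  have hexcess : ∫ ω in B, h ω ∂μ - s * μ.real B ≤ ∫ ω, max (h ω - s) 0 ∂μ :=
    calc ∫ ω in B, h ω ∂μ - s * μ.real B = ∫ ω in B, (h ω - s) ∂μ := by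
          rw [integral_sub hh.integrableOn (integrableOn_const (measure_ne_top _ _)),
            setIntegral_const, smul_eq_mul, mul_comm]
      _ ≤ ∫ ω in B, max (h ω - s) 0 ∂μ :=
          setIntegral_mono (hh.sub (integrable_const s)).integrableOn hpos.integrableOn
            fun ω => le_max_left _ _
      _ ≤ ∫ ω, max (h ω - s) 0 ∂μ :=
          setIntegral_le_integral hpos (.of_forall fun ω => le_max_right _ _)
  linarith

lemma rpow_mul_measureReal_lt_condExp_abs_le {Ω : Type*} {m mΩ : MeasurableSpace Ω}
    {μ : Measure Ω} [IsFiniteMeasure μ] (hm : m ≤ mΩ) {f : Ω → ℝ} (hf : Integrable f μ)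
    {p ε s : ℝ} (hp : 1 < p) (hs : 0 < s)
    (htail : ∀ u, s ≤ u → u ^ p * μ.real {ω | u < |f ω|} ≤ ε) {t : ℝ} (ht : 2 * s ≤ t) :
    t ^ p * μ.real {ω | t < μ[fun ω => |f ω| | m] ω} ≤ 2 ^ p / (p - 1) * ε := by
  obtain ⟨r, rfl⟩ : ∃ r, t = 2 * r := ⟨t / 2, by ring⟩
  have hr : 0 < r := by linarith
  have hε : 0 ≤ ε := le_trans (by positivity) (htail s le_rfl)
  have htail' : ∀ u, r ≤ u → μ {ω | u < |f ω|} ≤ ENNReal.ofReal (ε * u ^ (-p)) := by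
    intro u hu
    have hu0 : 0 < u := hr.trans_le hu
    rw [← ofReal_measureReal]
    refine ENNReal.ofReal_le_ofReal ?_
    rw [Real.rpow_neg hu0.le, ← div_eq_mul_inv, le_div_iff₀ (by positivity), mul_comm]
    exact htail u (by linarith)
  have hexcess : ∫ ω, max (|f ω| - r) 0 ∂μ ≤ ε * r ^ (1 - p) / (p - 1) := by
    have hpos : Integrable (fun ω => max (|f ω| - r) 0) μ :=
      (hf.abs.sub (integrable_const r)).pos_part
    rw [← ENNReal.ofReal_le_ofReal_iff (by have := sub_pos.2 hp; positivity),
      ofReal_integral_eq_lintegral_ofReal hpos (.of_forall fun ω => le_max_right _ _)]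
    simpa only [ENNReal.ofReal_max, ENNReal.ofReal_zero, max_zero] using
      lintegral_ofReal_sub_le_of_tail hf.1.aemeasurable.abs hp hε hr htail'
  set μB := μ.real {ω | 2 * r < μ[fun ω => |f ω| | m] ω}
  have hB : r * μB ≤ ε * r ^ (1 - p) / (p - 1) := by
    have := sub_mul_measureReal_lt_condExp_le hm hf.abs r (2 * r)
    linarith
  have hcancel : r ^ (p - 1) * r ^ (1 - p) = 1 := by rw [← Real.rpow_add hr]; norm_num
  calc (2 * r) ^ p * μB = 2 ^ p * r ^ (p - 1) * (r * μB) := by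
        rw [Real.mul_rpow zero_le_two hr.le, Real.rpow_sub_one hr.ne']
        field_simp
    _ ≤ 2 ^ p * r ^ (p - 1) * (ε * r ^ (1 - p) / (p - 1)) := by gcongr
    _ = 2 ^ p / (p - 1) * ε * (r ^ (p - 1) * r ^ (1 - p)) := by ring
    _ = 2 ^ p / (p - 1) * ε := by rw [hcancel, mul_one]

/-- **Lemma 1.4.** If `t^p μ{|f| > t} → 0` as `t → ∞`, then for every sub-σ-algebra `A`,
`t^p μ{E[|f| | A] > t} → 0` as `t → ∞`. -/
theorem statement5 {Ω : Type*} [mΩ : MeasurableSpace Ω] (μ : Measure Ω)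
    [IsProbabilityMeasure μ] (p : ℝ) (hp : 2 < p)
    (f : Ω → ℝ) (hf_int : Integrable f μ)
    (htail : Tendsto (fun t : ℝ => t ^ p * (μ {ω | t < |f ω|}).toReal) atTop (𝓝 0))
    (A : MeasurableSpace Ω) (hA : A ≤ mΩ) :
    Tendsto (fun t : ℝ => t ^ p * (μ {ω | t < (μ[(fun ω' => |f ω'|) | A]) ω}).toReal)
      atTop (𝓝 0) := by
  have hp1 : 1 < p := by linarith
  set C := 2 ^ p / (p - 1)
  have hC : 0 < C := div_pos (by positivity) (sub_pos.2 hp1)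
  refine Metric.tendsto_atTop.2 fun δ hδ => ?_
  have hε : 0 < δ / 2 / C := by positivity
  obtain ⟨s, hs⟩ := eventually_atTop.1
    ((htail.eventually (Iic_mem_nhds hε)).and (eventually_gt_atTop 0))
  have hs0 : 0 < s := (hs s le_rfl).2
  refine ⟨2 * s, fun t ht => ?_⟩
  have hbound := rpow_mul_measureReal_lt_condExp_abs_le hA hf_int hp1 hs0
    (fun u hu => (hs u hu).1) ht
  have ht0 : 0 < t := by linarith
  rw [Real.dist_eq, sub_zero, abs_of_nonneg (by positivity)]
  calc _ ≤ C * (δ / 2 / C) := hbound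
    _ < δ := by rw [mul_div_cancel₀ _ hC.ne']; linarith
end
end

section
/- Let p > 2, let f be a nonnegative integrable function on a probability space (Ω, F, μ), and let A be a sub-σ-algebra of F. Then for every t > 0, t^p μ{ E[f | A] > t } ≤ N_p( f χ{ E[f | A] > t } )^p. -/
open MeasureTheory ProbabilityTheory Filter Set
open scoped Topology ENNReal NNReal

noncomputable section

/-!
Let `S = {E[f | A] > t}`. Since `S` is `A`-measurable,
`∫_S |f| ≥ ∫_S f = ∫_S E[f | A] ≥ t μ(S)`. Testing the supremum defining `N_p(f χ_S)` on the
set `S` itself then gives `N_p(f χ_S) ≥ μ(S)^{-1+1/p} ∫_S |f| ≥ t μ(S)^{1/p}`, and raising this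
to the power `p` is the claim.
-/

section Np

variable {Ω : Type*} [MeasurableSpace Ω] {μ : Measure Ω} {p : ℝ}

theorem rpow_mul_setLIntegral_le_Np_indicator {s : Set Ω} (hs : MeasurableSet s)
    (hμs : 0 < μ s) (g : Ω → ℝ) :
    μ s ^ (-1 + 1 / p) * ∫⁻ ω in s, ENNReal.ofReal |g ω| ∂μ ≤ Np μ p (s.indicator g) := by
  have hind : ∫⁻ ω in s, ENNReal.ofReal |s.indicator g ω| ∂μ
      = ∫⁻ ω in s, ENNReal.ofReal |g ω| ∂μ :=
    setLIntegral_congr_fun hs fun ω hω => by rw [indicator_of_mem hω]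
  rw [← hind]
  exact le_iSup₂_of_le s hs (le_iSup_of_le hμs le_rfl)

theorem rpow_mul_measure_le_Np_indicator_rpow (hp : 0 < p) {s : Set Ω} (hs : MeasurableSet s)
    (hμs : μ s ≠ ∞) {g : Ω → ℝ} {c : ℝ≥0∞}
    (hc : c * μ s ≤ ∫⁻ ω in s, ENNReal.ofReal |g ω| ∂μ) :
    c ^ p * μ s ≤ Np μ p (s.indicator g) ^ p := by
  rcases (zero_le : 0 ≤ μ s).eq_or_lt with hμs0 | hμs0
  · rw [← hμs0, mul_zero]
    exact zero_le
  have hexp : μ s ^ (-1 + 1 / p) * μ s = μ s ^ (1 / p) := by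
    conv_lhs => rhs; rw [← ENNReal.rpow_one (μ s)]
    rw [← ENNReal.rpow_add _ _ hμs0.ne' hμs]
    norm_num
  have hroot : c * μ s ^ (1 / p) ≤ Np μ p (s.indicator g) :=
    calc c * μ s ^ (1 / p) = μ s ^ (-1 + 1 / p) * (c * μ s) := by rw [← hexp]; ring
      _ ≤ μ s ^ (-1 + 1 / p) * ∫⁻ ω in s, ENNReal.ofReal |g ω| ∂μ := by gcongr
      _ ≤ Np μ p (s.indicator g) := rpow_mul_setLIntegral_le_Np_indicator hs hμs0 g
  calc c ^ p * μ s = (c * μ s ^ (1 / p)) ^ p := by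
        rw [ENNReal.mul_rpow_of_nonneg _ _ hp.le, ← ENNReal.rpow_mul, one_div,
          inv_mul_cancel₀ hp.ne', ENNReal.rpow_one]
    _ ≤ Np μ p (s.indicator g) ^ p := ENNReal.rpow_le_rpow hroot hp.le

end Np

theorem ofReal_mul_measure_le_setLIntegral_of_le_condExp {Ω : Type*} {m mΩ : MeasurableSpace Ω}
    {μ : Measure Ω} [IsFiniteMeasure μ] (hm : m ≤ mΩ) {f : Ω → ℝ} (hf : Integrable f μ)
    {s : Set Ω} (hs : MeasurableSet[m] s) {t : ℝ} (ht : 0 ≤ t) (hts : ∀ ω ∈ s, t ≤ μ[f | m] ω) :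
    ENNReal.ofReal t * μ s ≤ ∫⁻ ω in s, ENNReal.ofReal |f ω| ∂μ := by
  have hreal : t * μ.real s ≤ ∫ ω in s, |f ω| ∂μ :=
    calc t * μ.real s ≤ ∫ ω in s, (μ[f | m]) ω ∂μ :=
          setIntegral_ge_of_const_le_real (hm s hs) (measure_ne_top μ s) hts
            integrable_condExp.integrableOn
      _ = ∫ ω in s, f ω ∂μ := setIntegral_condExp hm hf hs
      _ ≤ ∫ ω in s, |f ω| ∂μ :=
          integral_mono hf.integrableOn hf.abs.integrableOn fun ω => le_abs_self (f ω)
  rw [← ofReal_integral_eq_lintegral_ofReal hf.abs.integrableOn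
      (ae_of_all _ fun ω => abs_nonneg _),
    ← ENNReal.ofReal_toReal (measure_ne_top μ s), ← ENNReal.ofReal_mul ht]
  exact ENNReal.ofReal_le_ofReal hreal

theorem statement9_general {Ω : Type*} (A : MeasurableSpace Ω) [mΩ : MeasurableSpace Ω]
    (μ : Measure Ω) [IsProbabilityMeasure μ] (p : ℝ) (hp : 2 < p)
    (f : Ω → ℝ) (hf_int : Integrable f μ)
    (hA : A ≤ mΩ) :
    ∀ t > (0:ℝ),
      ENNReal.ofReal (t ^ p) * μ {ω | t < (μ[f | A]) ω}
        ≤ (Np μ p (fun ω => ({ω' | t < (μ[f | A]) ω'}).indicator f ω)) ^ p := by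
  intro t ht
  have hS : MeasurableSet[A] {ω | t < (μ[f | A]) ω} :=
    stronglyMeasurable_condExp.measurable measurableSet_Ioi
  rw [← ENNReal.ofReal_rpow_of_pos ht]
  exact rpow_mul_measure_le_Np_indicator_rpow (by linarith) (hA _ hS) (measure_ne_top μ _)
    (ofReal_mul_measure_le_setLIntegral_of_le_condExp hA hf_int hS ht.le fun _ hω => hω.le)

/-- **(1.17).** For nonnegative integrable `f` and a sub-σ-algebra `A`, for every `t > 0`,
`t^p μ{E[f | A] > t} ≤ N_p(f χ{E[f | A] > t})^p`. -/
theorem statement9 {Ω : Type*} (A : MeasurableSpace Ω) [mΩ : MeasurableSpace Ω]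
    (μ : Measure Ω) [IsProbabilityMeasure μ] (p : ℝ) (hp : 2 < p)
    (f : Ω → ℝ) (hf_nonneg : ∀ ω, 0 ≤ f ω) (hf_int : Integrable f μ)
    (hA : A ≤ mΩ) :
    ∀ t > (0:ℝ),
      ENNReal.ofReal (t ^ p) * μ {ω | t < (μ[f | A]) ω}
        ≤ (Np μ p (fun ω => ({ω' | t < (μ[f | A]) ω'}).indicator f ω)) ^ p :=
  statement9_general A (mΩ := mΩ) μ p hp f hf_int hA
end
end

section
/- Let (Ω, F, μ, T) be a dynamical system with T invertible and bi-measure-preserving, let M be a sub-σ-algebra with T M ⊂ M, and let f be integrable. Define U h := h ∘ T, E_k(h) := E[h | T^k M] and P_k(h) := E_k(h) − E_{k+1}(h). Then for every i ≥ 1, P_i(f) − P_0(U^i f) = h − U h, where h := Σ_{k=0}^{i−1} U^k ( P_i(f) ); that is, P_i(f) − P_0(U^i f) is a coboundary. -/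
open MeasureTheory Filter Set
open scoped Topology ENNReal

noncomputable section

/-- Key pull-back lemma: for an invertible bi-measurable measure-preserving map `φ`,
`E[f | map φ N] ∘ φ = E[f ∘ φ | N]` a.e. -/
lemma condexp_comp_key {Ω : Type*} (N : MeasurableSpace Ω) [mΩ : MeasurableSpace Ω]
    (μ : Measure Ω)
    [IsProbabilityMeasure μ] (φ ψ : Ω → Ω) (hφ : MeasurePreserving φ μ μ)
    (hψm : Measurable ψ) (hψφ : Function.LeftInverse ψ φ)
    (hφψ : Function.RightInverse ψ φ)
    (hN : N ≤ mΩ) (hNφ : MeasurableSpace.map φ N ≤ mΩ)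
    (f : Ω → ℝ) (hf : Integrable f μ) :
    (fun ω => (μ[f | MeasurableSpace.map φ N]) (φ ω)) =ᵐ[μ]
      μ[(fun ω => f (φ ω)) | N] := by
  have hφemb : @MeasurableEmbedding Ω Ω mΩ mΩ φ :=
    @MeasurableEquiv.measurableEmbedding Ω Ω mΩ mΩ ⟨⟨φ, ψ, hψφ, hφψ⟩, hφ.measurable, hψm⟩
  have hG_int : Integrable (μ[f | MeasurableSpace.map φ N]) μ := integrable_condExp
  have hfφ_int : Integrable (fun ω => f (φ ω)) μ :=
    (hφ.integrable_comp_emb hφemb).mpr hf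
  refine ae_eq_condExp_of_forall_setIntegral_eq hN hfφ_int ?_ ?_ ?_
  · intro s hs hμs
    exact ((hφ.integrable_comp_emb hφemb).mpr hG_int).integrableOn
  · intro s hs hμs
    -- s = φ ⁻¹' t with t := ψ ⁻¹' s ∈ map φ N
    set t : Set Ω := ψ ⁻¹' s with ht
    have hst : s = φ ⁻¹' t := by
      ext x; simp [ht, hψφ x]
    have htm : MeasurableSet[MeasurableSpace.map φ N] t := by
      show MeasurableSet[N] (φ ⁻¹' t)
      rw [← hst]; exact hs
    calc ∫ x in s, (μ[f | MeasurableSpace.map φ N]) (φ x) ∂μ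
        = ∫ y in t, (μ[f | MeasurableSpace.map φ N]) y ∂μ := by
          rw [hst]; exact hφ.setIntegral_preimage_emb hφemb _ t
      _ = ∫ y in t, f y ∂μ := setIntegral_condExp hNφ hf htm
      _ = ∫ x in s, f (φ x) ∂μ := by
          rw [hst]; exact (hφ.setIntegral_preimage_emb hφemb f t).symm
  · have hφmeasN : @Measurable Ω Ω N (MeasurableSpace.map φ N) φ := fun s hs => hs
    exact StronglyMeasurable.aestronglyMeasurable
      ((stronglyMeasurable_condExp).comp_measurable hφmeasN)

/-- **(3.119)–(3.120).** For an invertible bi-measure-preserving `T`, a sub-σ-algebra `M`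
with `T M ⊂ M`, `E_k(h) = E[h | T^k M]`, `P_k(h) = E_k(h) − E_{k+1}(h)` and `U h = h ∘ T`,
one has, for `i ≥ 1`, `P_i(f) − P_0(U^i f) = h − U h` with
`h = ∑_{k=0}^{i−1} U^k (P_i(f))`; that is, `P_i(f) − P_0(U^i f)` is a coboundary. -/
theorem statement18 {Ω : Type*} (M : MeasurableSpace Ω) [mΩ : MeasurableSpace Ω]
    (μ : Measure Ω) [IsProbabilityMeasure μ]
    (T S : Ω → Ω) (hT : MeasurePreserving T μ μ) (hS : MeasurePreserving S μ μ)
    (hST : Function.LeftInverse S T) (hTS : Function.RightInverse S T)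
    (hM : M ≤ mΩ) (hTM : MeasurableSpace.map T M ≤ M)
    (f : Ω → ℝ) (hf_int : Integrable f μ) (i : ℕ) (hi : 1 ≤ i) :
    (fun ω =>
        ((μ[f | MeasurableSpace.map (T^[i]) M]) ω
          - (μ[f | MeasurableSpace.map (T^[i+1]) M]) ω)
        - ((μ[(fun ω' => f (T^[i] ω')) | MeasurableSpace.map (T^[0]) M]) ω
          - (μ[(fun ω' => f (T^[i] ω')) | MeasurableSpace.map (T^[1]) M]) ω))
      =ᵐ[μ]
    (fun ω =>
        (∑ k ∈ Finset.range i,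
          ((μ[f | MeasurableSpace.map (T^[i]) M]) (T^[k] ω)
            - (μ[f | MeasurableSpace.map (T^[i+1]) M]) (T^[k] ω)))
        - (∑ k ∈ Finset.range i,
          ((μ[f | MeasurableSpace.map (T^[i]) M]) (T^[k] (T ω))
            - (μ[f | MeasurableSpace.map (T^[i+1]) M]) (T^[k] (T ω))))) := by
  -- iterated σ-algebras are decreasing
  have hMapLe : ∀ j : ℕ, MeasurableSpace.map (T^[j]) M ≤ M := by
    intro j
    induction j with
    | zero => simp [MeasurableSpace.map_id]
    | succ n ih =>
        rw [Function.iterate_succ, ← MeasurableSpace.map_comp]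
        exact le_trans (MeasurableSpace.map_mono hTM) ih
  set g : Ω → ℝ := fun ω =>
    (μ[f | MeasurableSpace.map (T^[i]) M]) ω - (μ[f | MeasurableSpace.map (T^[i+1]) M]) ω
    with hg
  -- The right-hand side telescopes pointwise
  have hRHS : ∀ ω, (∑ k ∈ Finset.range i, g (T^[k] ω))
      - (∑ k ∈ Finset.range i, g (T^[k] (T ω))) = g ω - g (T^[i] ω) := by
    intro ω
    have h2 : (∑ k ∈ Finset.range i, g (T^[k] (T ω)))
        = ∑ k ∈ Finset.range i, g (T^[k+1] ω) := by
      refine Finset.sum_congr rfl fun k _ => ?_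
      rw [Function.iterate_succ_apply]
    rw [h2, ← Finset.sum_sub_distrib,
      Finset.sum_range_sub' (fun k => g (T^[k] ω)) i, Function.iterate_zero_apply]
  -- pull-back identities for the two conditional expectations
  have hSi_m : Measurable (S^[i]) := hS.measurable.iterate i
  have hL : Function.LeftInverse (S^[i]) (T^[i]) := hST.iterate i
  have hR : Function.RightInverse (S^[i]) (T^[i]) := hTS.iterate i
  have key1 : (fun ω => (μ[f | MeasurableSpace.map (T^[i]) M]) (T^[i] ω)) =ᵐ[μ]
      μ[(fun ω' => f (T^[i] ω')) | M] :=
    condexp_comp_key M μ (T^[i]) (S^[i]) (hT.iterate i) hSi_m hL hR hM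
      (le_trans (hMapLe i) hM) f hf_int
  have key2 : (fun ω =>
        (μ[f | MeasurableSpace.map (T^[i]) (MeasurableSpace.map T M)]) (T^[i] ω)) =ᵐ[μ]
      μ[(fun ω' => f (T^[i] ω')) | MeasurableSpace.map T M] :=
    condexp_comp_key (MeasurableSpace.map T M) μ (T^[i]) (S^[i])
      (hT.iterate i) hSi_m hL hR (le_trans hTM hM)
      (by rw [MeasurableSpace.map_comp, ← Function.iterate_succ]
          exact le_trans (hMapLe (i+1)) hM) f hf_int
  have hmap2 : MeasurableSpace.map (T^[i]) (MeasurableSpace.map T M)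
      = MeasurableSpace.map (T^[i+1]) M := by
    rw [MeasurableSpace.map_comp, ← Function.iterate_succ]
  rw [hmap2] at key2
  have h0 : MeasurableSpace.map (T^[0]) M = M := by
    simp [MeasurableSpace.map_id]
  have h1' : MeasurableSpace.map (T^[1]) M = MeasurableSpace.map T M := by
    simp
  filter_upwards [key1, key2] with ω h1ω h2ω
  show g ω - ((μ[(fun ω' => f (T^[i] ω')) | MeasurableSpace.map (T^[0]) M]) ω
      - (μ[(fun ω' => f (T^[i] ω')) | MeasurableSpace.map (T^[1]) M]) ω)
    = (∑ k ∈ Finset.range i, g (T^[k] ω)) - (∑ k ∈ Finset.range i, g (T^[k] (T ω)))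
  rw [hRHS ω, h0, h1']
  rw [← h1ω, ← h2ω]
end
end
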